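/- Let 𝒫 ⊆ ℝ^d be a finite symmetric set of vectors and a : 𝒫 → ℝ a function such that P(a) = {x ∈ ℝ^d : ⟨p,x⟩ ≤ a(p) for all p ∈ 𝒫} is a compact polytope of dimension d. Let e ∈ ℝ^d be nonzero and b ≥ 0. Suppose that every exposed face F of P(a) of dimension d−2 which belongs to the shadow boundary of P(a) in direction e and is transversal to e is a contact face with contact vector orthogonal to e, i.e., there exists p ∈ 𝒫 with ⟨e,p⟩ = 0 such that F = P(a) ∩ {x : ⟨p,x⟩ = a(p)}. Then P(a) + b·z(e) = P(a + f_e), i.e., the Minkowski sum of P(a) and the segment b·z(e) equals {x ∈ ℝ^d : ⟨p,x⟩ ≤ a(p) + b|⟨p,e⟩| for all p ∈ 𝒫}. -/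

import Mathlib

open scoped RealInnerProductSpace Pointwise

/-- The segment `b·z(e) = {λ • e : -b ≤ λ ≤ b}`. -/
def segZ {d : ℕ} (e : EuclideanSpace ℝ (Fin d)) (b : ℝ) : Set (EuclideanSpace ℝ (Fin d)) :=
  {x | ∃ l : ℝ, -b ≤ l ∧ l ≤ b ∧ x = l • e}

/-- `P(a) = {x : ⟪p, x⟫ ≤ a p for all p ∈ Pset}`. -/
def polyOf {d : ℕ} (Pset : Set (EuclideanSpace ℝ (Fin d))) (a : EuclideanSpace ℝ (Fin d) → ℝ) :
    Set (EuclideanSpace ℝ (Fin d)) :=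
  {x | ∀ p ∈ Pset, ⟪p, x⟫ ≤ a p}

/-- The exposed face of `P` in direction `u`. -/
def expFace {d : ℕ} (P : Set (EuclideanSpace ℝ (Fin d))) (u : EuclideanSpace ℝ (Fin d)) :
    Set (EuclideanSpace ℝ (Fin d)) :=
  {x ∈ P | ∀ y ∈ P, ⟪u, y⟫ ≤ ⟪u, x⟫}

/-- The dimension of a set: the dimension of the direction of its affine span. -/
noncomputable def sdim {d : ℕ} (S : Set (EuclideanSpace ℝ (Fin d))) : ℕ :=
  Module.finrank ℝ (affineSpan ℝ S).direction


/-! The inclusion `P(a) + b·z(e) ⊆ P(a + f_e)` is immediate. Conversely, Fourier–Motzkin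
elimination of `e` describes the cylinder `P(a) + ℝe` by the constraints `p ∈ 𝒫` with
`⟪p, e⟫ = 0` together with the combinations `⟪p, e⟫ q - ⟪q, e⟫ p` of pairs with
`⟪p, e⟫ > 0 > ⟪q, e⟫`. If a point `x` of `P(a + f_e)` lay outside the cylinder, it would violate
an irredundant pair constraint, whose facet of the cylinder is `F + ℝe` for a transversal
shadow-boundary face `F` of `P(a)` of dimension `d - 2`. By hypothesis `F` is a contact face
with contact vector `p ⊥ e`, necessarily a positive multiple of the normal of that facet, and
`x` satisfies the constraint of `p`. So `x - t e ∈ P(a)` for some `t`, and clamping `t` to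
`[-b, b]` keeps it there because `x ∈ P(a + f_e)`. -/

open Set Filter Topology Module

lemma exists_forall_le_forall_le {U L : Set ℝ} (hU : BddAbove U) (hL : BddBelow L)
    (h : ∀ u ∈ U, ∀ l ∈ L, u ≤ l) : ∃ t, (∀ u ∈ U, u ≤ t) ∧ ∀ l ∈ L, t ≤ l := by
  obtain ⟨m, hm⟩ := hL
  refine ⟨sSup (insert m U), fun u hu => le_csSup (hU.insert m) (mem_insert_of_mem m hu),
    fun l hl => csSup_le (insert_nonempty m U) ?_⟩
  rintro _ (rfl | hu)
  exacts [hm hl, h _ hu l hl]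

lemma exists_forall_le_mul_iff {ι : Type*} {s : Set ι} (hs : s.Finite) {g k : ι → ℝ} :
    (∃ t, ∀ i ∈ s, g i ≤ t * k i) ↔ (∀ i ∈ s, k i = 0 → g i ≤ 0) ∧
      ∀ i ∈ s, 0 < k i → ∀ j ∈ s, k j < 0 → k i * g j ≤ k j * g i := by
  constructor
  · rintro ⟨t, ht⟩
    refine ⟨fun i hi hki => by simpa [hki] using ht i hi, fun i hi hki j hj hkj => ?_⟩
    nlinarith [ht i hi, ht j hj]
  · rintro ⟨hzero, hpair⟩
    obtain ⟨t, hlow, hup⟩ := exists_forall_le_forall_le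
      (U := (fun i => g i / k i) '' {i ∈ s | 0 < k i})
      (L := (fun i => g i / k i) '' {i ∈ s | k i < 0})
      ((hs.subset (sep_subset _ _)).image _).bddAbove
      ((hs.subset (sep_subset _ _)).image _).bddBelow
      (by
        rintro _ ⟨i, ⟨hi, hki⟩, rfl⟩ _ ⟨j, ⟨hj, hkj⟩, rfl⟩
        rw [div_le_iff₀ hki, div_mul_eq_mul_div, le_div_iff_of_neg hkj]
        linarith [hpair i hi hki j hj hkj])
    refine ⟨t, fun i hi => ?_⟩
    rcases lt_trichotomy (k i) 0 with hk | hk | hk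
    · exact (le_div_iff_of_neg hk).1 (hup _ ⟨i, ⟨hi, hk⟩, rfl⟩)
    · simpa [hk] using hzero i hi hk
    · exact (div_le_iff₀ hk).1 (hlow _ ⟨i, ⟨hi, hk⟩, rfl⟩)

lemma le_max_min_mul {g k t b : ℝ} (ht : g ≤ t * k) (hb : g ≤ b * |k|) :
    g ≤ max (-b) (min b t) * k := by
  rcases le_total 0 k with hk | hk
  · rw [abs_of_nonneg hk] at hb
    calc g ≤ min b t * k := by
          rcases le_total b t with h | h
          · rwa [min_eq_left h]
          · rwa [min_eq_right h]
      _ ≤ _ := mul_le_mul_of_nonneg_right (le_max_right _ _) hk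
  · rw [abs_of_nonpos hk] at hb
    calc g ≤ max (-b) t * k := by
          rcases le_total (-b) t with h | h
          · rwa [max_eq_right h]
          · rw [max_eq_left h]; linarith
      _ ≤ _ := mul_le_mul_of_nonpos_right (max_le_max le_rfl (min_le_right _ _)) hk

section Halfspaces

variable {E : Type*} [NormedAddCommGroup E] [InnerProductSpace ℝ E]

def interHalfspaces (C : Set (E × ℝ)) : Set E :=
  {y | ∀ i ∈ C, ⟪i.1, y⟫ ≤ i.2}

lemma mem_interHalfspaces {C : Set (E × ℝ)} {y : E} :
    y ∈ interHalfspaces C ↔ ∀ i ∈ C, ⟪i.1, y⟫ ≤ i.2 :=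
  Iff.rfl

lemma interHalfspaces_anti {C D : Set (E × ℝ)} (h : C ⊆ D) :
    interHalfspaces D ⊆ interHalfspaces C :=
  fun _ hy i hi => hy i (h hi)

lemma exists_pos_add_smul_mem {s : Set E} {y : E} (hs : s ∈ 𝓝 y) (v : E) :
    ∃ t : ℝ, 0 < t ∧ y + t • v ∈ s := by
  have hlim : Tendsto (fun t : ℝ => y + t • v) (𝓝[>] 0) (𝓝 y) :=
    ((continuous_const.add (continuous_id.smul continuous_const)).tendsto' 0 y
      (by simp)).mono_left nhdsWithin_le_nhds
  obtain ⟨t, hts, ht⟩ := ((hlim.eventually hs).and self_mem_nhdsWithin).exists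
  exact ⟨t, ht, hts⟩

lemma inner_lt_of_mem_interior {s : Set E} {n y : E} {c : ℝ} (hs : ∀ z ∈ s, ⟪n, z⟫ ≤ c)
    (hn : n ≠ 0) (hy : y ∈ interior s) : ⟪n, y⟫ < c := by
  obtain ⟨t, ht, hyt⟩ := exists_pos_add_smul_mem (mem_interior_iff_mem_nhds.1 hy) n
  have := hs _ hyt
  rw [inner_add_right, real_inner_smul_right, real_inner_self_eq_norm_sq] at this
  nlinarith [pow_pos (norm_pos_iff.2 hn) 2]

lemma exists_irredundant_subset {C : Set (E × ℝ)} (hC : C.Finite) :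
    ∃ D ⊆ C, interHalfspaces D = interHalfspaces C ∧
      ∀ i ∈ D, ∃ w ∈ interHalfspaces (D \ {i}), i.2 < ⟪i.1, w⟫ := by
  obtain ⟨D, ⟨hDC, hD⟩, hmin⟩ :=
    (hC.finite_subsets.subset fun D (hD : D ⊆ C ∧ _) => hD.1).exists_minimal
      (⟨C, subset_rfl, rfl⟩ : {D | D ⊆ C ∧ interHalfspaces D = interHalfspaces C}.Nonempty)
  refine ⟨D, hDC, hD, fun i hi => ?_⟩
  have hne : interHalfspaces (D \ {i}) ≠ interHalfspaces D := fun h =>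
    (hmin ⟨sdiff_subset.trans hDC, h.trans hD⟩ sdiff_subset hi).2 rfl
  obtain ⟨w, hw, hwD⟩ := exists_of_ssubset
    ((interHalfspaces_anti sdiff_subset).ssubset_of_ne hne.symm)
  simp only [mem_interHalfspaces, not_forall, not_le] at hwD
  obtain ⟨j, hj, hjw⟩ := hwD
  obtain rfl : j = i := by_contra fun hji => (hw j ⟨hj, hji⟩).not_gt hjw
  exact ⟨w, hw, hjw⟩

theorem exists_facet_of_notMem {C : Set (E × ℝ)} (hC : C.Finite) {y₀ x : E}
    (hy₀ : y₀ ∈ interior (interHalfspaces C)) (hx : x ∉ interHalfspaces C) :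
    ∃ i ∈ C, i.2 < ⟪i.1, x⟫ ∧ ∃ z, ⟪i.1, z⟫ = i.2 ∧
      ∀ᶠ y in 𝓝 z, ⟪i.1, y⟫ = i.2 → y ∈ interHalfspaces C := by
  obtain ⟨D, hDC, hD, hirr⟩ := exists_irredundant_subset hC
  rw [← hD] at hy₀ hx ⊢
  simp only [mem_interHalfspaces, not_forall, not_le] at hx
  obtain ⟨i, hi, hxi⟩ := hx
  -- an irredundant constraint is violated somewhere, so it is strict in the interior
  have hstrict : ∀ j ∈ D, ⟪j.1, y₀⟫ < j.2 := by
    intro j hj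
    by_cases hj0 : j.1 = 0
    · obtain ⟨w, -, hw⟩ := hirr j hj
      have := interior_subset hy₀ j hj
      simp only [hj0, inner_zero_left] at hw this ⊢
      linarith
    · exact inner_lt_of_mem_interior (fun _ hz => mem_interHalfspaces.1 hz j hj) hj0 hy₀
  obtain ⟨w, hwD, hwi⟩ := hirr i hi
  have hy₀i := hstrict i hi
  set s := (i.2 - ⟪i.1, y₀⟫) / (⟪i.1, w⟫ - ⟪i.1, y₀⟫)
  have hs₀ : 0 < s := div_pos (by linarith) (by linarith)
  have hs₁ : s < 1 := (div_lt_one (by linarith)).2 (by linarith)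
  have hinner : ∀ n : E, ⟪n, y₀ + s • (w - y₀)⟫ = (1 - s) * ⟪n, y₀⟫ + s * ⟪n, w⟫ := by
    intro n; rw [inner_add_right, real_inner_smul_right, inner_sub_right]; ring
  -- the segment from `y₀` to `w` crosses the hyperplane of `i` where all of `D \ {i}` is strict
  refine ⟨i, hDC hi, hxi, y₀ + s • (w - y₀), ?_, ?_⟩
  · have hs : s * (⟪i.1, w⟫ - ⟪i.1, y₀⟫) = i.2 - ⟪i.1, y₀⟫ := div_mul_cancel₀ _ (by linarith)
    rw [hinner]
    linarith
  · have hopen : ∀ᶠ y in 𝓝 (y₀ + s • (w - y₀)), ∀ j ∈ D \ {i}, ⟪j.1, y⟫ < j.2 := by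
      refine (eventually_all_finite (hC.subset (sdiff_subset.trans hDC))).2 fun j hj => ?_
      refine (continuous_const.inner continuous_id).continuousAt.eventually_lt
        continuousAt_const ?_
      show ⟪j.1, y₀ + s • (w - y₀)⟫ < j.2
      rw [hinner]
      nlinarith [hstrict j hj.1, hwD j hj]
    filter_upwards [hopen] with y hy hyi j hj
    by_cases hji : j = i
    · exact hji ▸ hyi.le
    · exact (hy j ⟨hj, hji⟩).le

lemma vectorSpan_le_orthogonal {s : Set E} {n : E} {c : ℝ} (h : ∀ x ∈ s, ⟪n, x⟫ = c) :
    vectorSpan ℝ s ≤ (ℝ ∙ n)ᗮ := by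
  rw [vectorSpan_def, Submodule.span_le]
  rintro _ ⟨x, hx, y, hy, rfl⟩
  simp [Submodule.mem_orthogonal_singleton_iff_inner_right, inner_sub_right, h x hx, h y hy]

lemma vectorSpan_sup_span_eq_orthogonal {F : Set E} {w e z : E} {c : ℝ}
    (hF : ∀ y ∈ F, ⟪w, y⟫ = c) (hwe : ⟪w, e⟫ = 0)
    (hz : ∀ᶠ y in 𝓝 z, ⟪w, y⟫ = ⟪w, z⟫ → ∃ f ∈ F, ∃ t : ℝ, y = f + t • e) :
    vectorSpan ℝ F ⊔ ℝ ∙ e = (ℝ ∙ w)ᗮ := by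
  refine le_antisymm (sup_le (vectorSpan_le_orthogonal hF) ?_) fun v hv => ?_
  · rwa [Submodule.span_singleton_le_iff_mem, Submodule.mem_orthogonal_singleton_iff_inner_right]
  rw [Submodule.mem_orthogonal_singleton_iff_inner_right] at hv
  obtain ⟨s, hs, hsv⟩ := exists_pos_add_smul_mem hz v
  obtain ⟨f₁, hf₁, t₁, h₁⟩ := hsv (by rw [inner_add_right, real_inner_smul_right, hv]; ring)
  obtain ⟨f₀, hf₀, t₀, h₀⟩ := hz.self_of_nhds rfl
  have hsv' : s • v = (f₁ -ᵥ f₀) + (t₁ - t₀) • e := by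
    rw [vsub_eq_sub, sub_smul, ← add_sub_cancel_left z (s • v), h₁, h₀]; abel
  refine (Submodule.smul_mem_iff _ hs.ne').1 ?_
  rw [hsv']
  exact Submodule.add_mem_sup (vsub_mem_vectorSpan ℝ hf₁ hf₀)
    (Submodule.smul_mem _ _ (Submodule.mem_span_singleton_self e))

lemma finrank_add_two_of_sup_span_singleton_eq [FiniteDimensional ℝ E] {V : Submodule ℝ E}
    {e w : E} (hw : w ≠ 0) (he : e ∉ V) (h : V ⊔ ℝ ∙ e = (ℝ ∙ w)ᗮ) :
    finrank ℝ V + 2 = finrank ℝ E := by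
  have h₁ := Submodule.finrank_sup_span_singleton he
  have h₂ := Submodule.finrank_add_finrank_orthogonal (ℝ ∙ w)
  rw [h] at h₁
  rw [finrank_span_singleton hw] at h₂
  omega

lemma mem_span_singleton_of_orthogonal_le_sup {V : Submodule ℝ E} {n e w : E}
    (h : (ℝ ∙ w)ᗮ ≤ V ⊔ ℝ ∙ e) (hnV : V ≤ (ℝ ∙ n)ᗮ) (hne : ⟪n, e⟫ = 0) : n ∈ ℝ ∙ w := by
  have hle : V ⊔ ℝ ∙ e ≤ (ℝ ∙ n)ᗮ := by
    refine sup_le hnV ?_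
    rwa [Submodule.span_singleton_le_iff_mem, Submodule.mem_orthogonal_singleton_iff_inner_right]
  rw [← Submodule.orthogonal_orthogonal (ℝ ∙ w)]
  exact Submodule.orthogonal_le h (Submodule.orthogonal_le hle
    (Submodule.le_orthogonal_orthogonal _ (Submodule.mem_span_singleton_self n)))

end Halfspaces

section Polytope

variable {d : ℕ} {Pset : Set (EuclideanSpace ℝ (Fin d))} {a : EuclideanSpace ℝ (Fin d) → ℝ}
  {e : EuclideanSpace ℝ (Fin d)}

lemma convex_polyOf : Convex ℝ (polyOf Pset a) := by
  intro x hx y hy s t hs ht hst p hp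
  rw [inner_add_right, real_inner_smul_right, real_inner_smul_right]
  have hap : a p = s * a p + t * a p := by rw [← add_mul, hst, one_mul]
  nlinarith [mul_le_mul_of_nonneg_left (hx p hp) hs, mul_le_mul_of_nonneg_left (hy p hp) ht]

lemma interior_polyOf_nonempty (hdim : sdim (polyOf Pset a) = d)
    (hne : (polyOf Pset a).Nonempty) : (interior (polyOf Pset a)).Nonempty := by
  rw [convex_polyOf.interior_nonempty_iff_affineSpan_eq_top,
    ← AffineSubspace.direction_eq_top_iff_of_nonempty ((affineSpan_nonempty ℝ).2 hne)]
  exact Submodule.eq_top_of_finrank_eq (by rw [finrank_euclideanSpace_fin]; exact hdim)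

lemma sub_smul_mem_polyOf_iff {y : EuclideanSpace ℝ (Fin d)} {t : ℝ} :
    y - t • e ∈ polyOf Pset a ↔ ∀ p ∈ Pset, ⟪p, y⟫ - a p ≤ t * ⟪p, e⟫ := by
  refine forall₂_congr fun p _ => ?_
  rw [inner_sub_right, real_inner_smul_right]
  constructor <;> intro h <;> linarith

lemma polyOf_add_segZ_subset (b : ℝ) :
    polyOf Pset a + segZ e b ⊆ polyOf Pset (fun p => a p + b * |⟪p, e⟫|) := by
  rintro _ ⟨y, hy, _, ⟨l, hl₁, hl₂, rfl⟩, rfl⟩ p hp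
  have hl : l * ⟪p, e⟫ ≤ b * |⟪p, e⟫| := by
    exact (le_abs_self _).trans (abs_mul l _ ▸ mul_le_mul_of_nonneg_right
      (abs_le.2 ⟨hl₁, hl₂⟩) (abs_nonneg _))
  rw [inner_add_right, real_inner_smul_right]
  linarith [hy p hp]

lemma mem_polyOf_add_segZ {b t : ℝ} (hb : 0 ≤ b) {x : EuclideanSpace ℝ (Fin d)}
    (ht : x - t • e ∈ polyOf Pset a)
    (hx : x ∈ polyOf Pset (fun p => a p + b * |⟪p, e⟫|)) : x ∈ polyOf Pset a + segZ e b := by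
  set s := max (-b) (min b t)
  refine ⟨x - s • e, sub_smul_mem_polyOf_iff.2 fun p hp => ?_, s • e,
    ⟨s, le_max_left _ _, max_le (by linarith) (min_le_left _ _), rfl⟩, sub_add_cancel _ _⟩
  have hxp : ⟪p, x⟫ ≤ a p + b * |⟪p, e⟫| := hx p hp
  exact le_max_min_mul (sub_smul_mem_polyOf_iff.1 ht p hp) (by linarith)

lemma expFace_eq_of_forall_le {P : Set (EuclideanSpace ℝ (Fin d))}
    {u z₀ : EuclideanSpace ℝ (Fin d)} {c : ℝ} (hle : ∀ y ∈ P, ⟪u, y⟫ ≤ c)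
    (hz₀ : z₀ ∈ P) (hc : ⟪u, z₀⟫ = c) : expFace P u = {z ∈ P | ⟪u, z⟫ = c} := by
  ext z
  constructor
  · rintro ⟨hz, hmax⟩
    exact ⟨hz, le_antisymm (hle z hz) (hc ▸ hmax z₀ hz₀)⟩
  · rintro ⟨hz, hzc⟩
    exact ⟨hz, fun y hy => hzc ▸ hle y hy⟩

noncomputable def pairNormal (e p q : EuclideanSpace ℝ (Fin d)) : EuclideanSpace ℝ (Fin d) :=
  ⟪p, e⟫ • q - ⟪q, e⟫ • p

noncomputable def pairBound (a : EuclideanSpace ℝ (Fin d) → ℝ) (e p q : EuclideanSpace ℝ (Fin d)) :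
    ℝ :=
  ⟪p, e⟫ * a q - ⟪q, e⟫ * a p

lemma inner_pairNormal (p q y : EuclideanSpace ℝ (Fin d)) :
    ⟪pairNormal e p q, y⟫ = ⟪p, e⟫ * ⟪q, y⟫ - ⟪q, e⟫ * ⟪p, y⟫ := by
  simp only [pairNormal, inner_sub_left, real_inner_smul_left]

lemma inner_pairNormal_self (p q : EuclideanSpace ℝ (Fin d)) : ⟪pairNormal e p q, e⟫ = 0 := by
  rw [inner_pairNormal, real_inner_comm e p, real_inner_comm e q]
  ring

section Pair

variable {p q : EuclideanSpace ℝ (Fin d)} (hp : p ∈ Pset) (hq : q ∈ Pset) (hpe : 0 < ⟪p, e⟫)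
  (hqe : ⟪q, e⟫ < 0)
include hp hq hpe hqe

lemma inner_pairNormal_le {z : EuclideanSpace ℝ (Fin d)} (hz : z ∈ polyOf Pset a) :
    ⟪pairNormal e p q, z⟫ ≤ pairBound a e p q := by
  rw [inner_pairNormal, pairBound]
  nlinarith [mul_le_mul_of_nonneg_left (hz q hq) hpe.le,
    mul_le_mul_of_nonpos_left (hz p hp) hqe.le]

lemma inner_eq_of_inner_pairNormal_eq {z : EuclideanSpace ℝ (Fin d)} (hz : z ∈ polyOf Pset a)
    (h : ⟪pairNormal e p q, z⟫ = pairBound a e p q) : ⟪p, z⟫ = a p := by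
  rw [inner_pairNormal, pairBound] at h
  refine le_antisymm (hz p hp) ?_
  nlinarith [mul_le_mul_of_nonneg_left (hz q hq) hpe.le]

end Pair

def fourierMotzkin (Pset : Set (EuclideanSpace ℝ (Fin d))) (a : EuclideanSpace ℝ (Fin d) → ℝ)
    (e : EuclideanSpace ℝ (Fin d)) : Set (EuclideanSpace ℝ (Fin d) × ℝ) :=
  (fun p => (p, a p)) '' {p ∈ Pset | ⟪p, e⟫ = 0} ∪
    image2 (fun p q => (pairNormal e p q, pairBound a e p q))
      {p ∈ Pset | 0 < ⟪p, e⟫} {q ∈ Pset | ⟪q, e⟫ < 0}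

lemma fourierMotzkin_finite (hfin : Pset.Finite) : (fourierMotzkin Pset a e).Finite :=
  ((hfin.subset (sep_subset _ _)).image _).union
    ((hfin.subset (sep_subset _ _)).image2 _ (hfin.subset (sep_subset _ _)))

lemma mem_interHalfspaces_fourierMotzkin (hfin : Pset.Finite) {y : EuclideanSpace ℝ (Fin d)} :
    y ∈ interHalfspaces (fourierMotzkin Pset a e) ↔ ∃ t : ℝ, y - t • e ∈ polyOf Pset a := by
  simp only [sub_smul_mem_polyOf_iff, exists_forall_le_mul_iff hfin, mem_interHalfspaces,
    fourierMotzkin, mem_union, or_imp, forall_and, forall_mem_image, forall_mem_image2,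
    mem_sep_iff, and_imp, inner_pairNormal, pairBound]
  refine and_congr (forall₃_congr fun p _ _ => ?_)
    (forall₃_congr fun p _ _ => forall₃_congr fun q _ _ => ?_)
  · exact sub_nonpos.symm
  · constructor <;> intro h <;> linarith

def ShadowFacetsAreContact (Pset : Set (EuclideanSpace ℝ (Fin d)))
    (a : EuclideanSpace ℝ (Fin d) → ℝ) (e : EuclideanSpace ℝ (Fin d)) : Prop :=
  ∀ F : Set (EuclideanSpace ℝ (Fin d)),
    (∃ u : EuclideanSpace ℝ (Fin d), u ≠ 0 ∧ F = expFace (polyOf Pset a) u) →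
    sdim F = d - 2 →
    (∀ x ∈ F, ∀ t : ℝ, x + t • e ∈ polyOf Pset a → x + t • e ∈ F) →
    (∀ x ∈ F, ∀ t : ℝ, x + t • e ∈ F → t = 0) →
    ∃ p ∈ Pset, ⟪e, p⟫ = 0 ∧ F = polyOf Pset a ∩ {x | ⟪p, x⟫ = a p}

lemma ShadowFacetsAreContact.exists_contact (hface : ShadowFacetsAreContact Pset a e)
    {w : EuclideanSpace ℝ (Fin d)} {c : ℝ} (hw : w ≠ 0) (hwe : ⟪w, e⟫ = 0)
    (hwP : ∀ y ∈ polyOf Pset a, ⟪w, y⟫ ≤ c) (hFne : ∃ f ∈ polyOf Pset a, ⟪w, f⟫ = c)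
    (heF : e ∉ vectorSpan ℝ {y ∈ polyOf Pset a | ⟪w, y⟫ = c})
    (hspan : vectorSpan ℝ {y ∈ polyOf Pset a | ⟪w, y⟫ = c} ⊔ ℝ ∙ e = (ℝ ∙ w)ᗮ) :
    ∃ n ∈ Pset, ⟪n, e⟫ = 0 ∧ n ∈ ℝ ∙ w ∧
      {y ∈ polyOf Pset a | ⟪w, y⟫ = c} = polyOf Pset a ∩ {x | ⟪n, x⟫ = a n} := by
  set F := {y ∈ polyOf Pset a | ⟪w, y⟫ = c}
  obtain ⟨f₀, hf₀, hf₀c⟩ := hFne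
  have hdim : sdim F = d - 2 := by
    have := finrank_add_two_of_sup_span_singleton_eq hw heF hspan
    rw [finrank_euclideanSpace_fin] at this
    rw [sdim, direction_affineSpan]
    omega
  have hshadow : ∀ x ∈ F, ∀ t : ℝ, x + t • e ∈ polyOf Pset a → x + t • e ∈ F :=
    fun x hx t hxt => ⟨hxt, by rw [inner_add_right, real_inner_smul_right, hwe, mul_zero,
      add_zero, hx.2]⟩
  have htrans : ∀ x ∈ F, ∀ t : ℝ, x + t • e ∈ F → t = 0 := fun x hx t hxt =>
    by_contra fun ht => heF ((Submodule.smul_mem_iff _ ht).1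
      (by simpa using vsub_mem_vectorSpan ℝ hxt hx))
  obtain ⟨n, hn, hen, hFn⟩ := hface F ⟨w, hw, (expFace_eq_of_forall_le hwP hf₀ hf₀c).symm⟩
    hdim hshadow htrans
  have hne : ⟪n, e⟫ = 0 := by rwa [real_inner_comm]
  refine ⟨n, hn, hne, mem_span_singleton_of_orthogonal_le_sup hspan.ge
    (vectorSpan_le_orthogonal (c := a n) fun y hy => ?_) hne, hFn⟩
  exact (hFn ▸ hy : y ∈ polyOf Pset a ∩ {x | ⟪n, x⟫ = a n}).2

lemma not_lt_inner_pairNormal (hface : ShadowFacetsAreContact Pset a e)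
    {p q : EuclideanSpace ℝ (Fin d)} (hp : p ∈ Pset) (hq : q ∈ Pset) (hpe : 0 < ⟪p, e⟫)
    (hqe : ⟪q, e⟫ < 0) {y₀ z x : EuclideanSpace ℝ (Fin d)}
    (hy₀ : y₀ ∈ interior (polyOf Pset a)) (hz : ⟪pairNormal e p q, z⟫ = pairBound a e p q)
    (hzloc : ∀ᶠ y in 𝓝 z, ⟪pairNormal e p q, y⟫ = pairBound a e p q →
      ∃ t : ℝ, y - t • e ∈ polyOf Pset a)
    (hx : ∀ n ∈ Pset, ⟪n, e⟫ = 0 → ⟪n, x⟫ ≤ a n) :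
    ¬ pairBound a e p q < ⟪pairNormal e p q, x⟫ := by
  intro hxw
  set w := pairNormal e p q
  set c := pairBound a e p q
  set F := {y ∈ polyOf Pset a | ⟪w, y⟫ = c}
  have hwe : ⟪w, e⟫ = 0 := inner_pairNormal_self p q
  have hwP : ∀ y ∈ polyOf Pset a, ⟪w, y⟫ ≤ c := fun y hy => inner_pairNormal_le hp hq hpe hqe hy
  have hw : w ≠ 0 := by
    rintro hw
    rw [hw, inner_zero_left] at hz hxw
    linarith
  have hlift : ∀ᶠ y in 𝓝 z, ⟪w, y⟫ = ⟪w, z⟫ → ∃ f ∈ F, ∃ t : ℝ, y = f + t • e := by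
    filter_upwards [hzloc] with y hy hyz
    obtain ⟨t, ht⟩ := hy (hyz.trans hz)
    refine ⟨y - t • e, ⟨ht, ?_⟩, t, (sub_add_cancel y _).symm⟩
    rw [inner_sub_right, real_inner_smul_right, hwe, mul_zero, sub_zero, hyz, hz]
  obtain ⟨f₀, hf₀, -⟩ := hlift.self_of_nhds rfl
  have heF : e ∉ vectorSpan ℝ F := fun he => hpe.ne' <| by
    simpa [Submodule.mem_orthogonal_singleton_iff_inner_right] using vectorSpan_le_orthogonal
      (fun y hy => inner_eq_of_inner_pairNormal_eq hp hq hpe hqe hy.1 hy.2) he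
  obtain ⟨n, hn, hne, hnw, hFn⟩ := hface.exists_contact hw hwe hwP ⟨f₀, hf₀⟩ heF
    (vectorSpan_sup_span_eq_orthogonal (fun y hy => hy.2) hwe hlift)
  obtain ⟨ρ, rfl⟩ := Submodule.mem_span_singleton.1 hnw
  have hF : ∀ y ∈ polyOf Pset a, ⟪w, y⟫ = c ↔ ρ * ⟪w, y⟫ = a (ρ • w) := fun y hy => by
    simpa [hy, real_inner_smul_left] using congrArg (y ∈ ·) hFn
  have hα : a (ρ • w) = ρ * c := by rw [← (hF f₀ hf₀.1).1 hf₀.2, hf₀.2]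
  have hy₀w : ⟪w, y₀⟫ < c := inner_lt_of_mem_interior hwP hw hy₀
  -- `y₀` lies off the face, which forces `ρ > 0`
  have hy₀n : ρ * ⟪w, y₀⟫ < ρ * c := by
    have := interior_subset hy₀ _ hn
    rw [real_inner_smul_left, hα] at this
    exact this.lt_of_ne fun h => hy₀w.ne ((hF y₀ (interior_subset hy₀)).2 (h.trans hα.symm))
  have hxn := hx _ hn hne
  rw [real_inner_smul_left, hα] at hxn
  nlinarith

theorem exists_sub_smul_mem_polyOf (hfin : Pset.Finite) (hface : ShadowFacetsAreContact Pset a e)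
    {y₀ x : EuclideanSpace ℝ (Fin d)} (hy₀ : y₀ ∈ interior (polyOf Pset a))
    (hx : ∀ p ∈ Pset, ⟪p, e⟫ = 0 → ⟪p, x⟫ ≤ a p) : ∃ t : ℝ, x - t • e ∈ polyOf Pset a := by
  have hcyl := fun y => mem_interHalfspaces_fourierMotzkin (a := a) (e := e) hfin (y := y)
  rw [← hcyl]
  by_contra hxC
  have hy₀C : y₀ ∈ interior (interHalfspaces (fourierMotzkin Pset a e)) :=
    interior_mono (fun y hy => (hcyl y).2 ⟨0, by rwa [zero_smul, sub_zero]⟩) hy₀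
  obtain ⟨i, hi, hxi, z, hz, hzloc⟩ :=
    exists_facet_of_notMem (fourierMotzkin_finite hfin) hy₀C hxC
  rcases hi with ⟨p, ⟨hp, hpe⟩, rfl⟩ | ⟨p, ⟨hp, hpe⟩, q, ⟨hq, hqe⟩, rfl⟩
  · exact (hx p hp hpe).not_gt hxi
  · exact not_lt_inner_pairNormal hface hp hq hpe hqe hy₀ hz
      (hzloc.mono fun y hy hyc => (hcyl y).1 (hy hyc)) hx hxi

end Polytope

theorem minkowski_voronoi_stmt6_general {d : ℕ}
    (Pset : Set (EuclideanSpace ℝ (Fin d))) (hfin : Pset.Finite)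
    (a : EuclideanSpace ℝ (Fin d) → ℝ)
    (hdim : sdim (polyOf Pset a) = d)
    (e : EuclideanSpace ℝ (Fin d)) (he : e ≠ 0) (b : ℝ) (hb : 0 ≤ b)
    (hface : ∀ F : Set (EuclideanSpace ℝ (Fin d)),
      -- F is an exposed face of P(a)
      (∃ u : EuclideanSpace ℝ (Fin d), u ≠ 0 ∧ F = expFace (polyOf Pset a) u) →
      -- of dimension d - 2
      sdim F = d - 2 →
      -- belonging to the shadow boundary of P(a) in direction e
      (∀ x ∈ F, ∀ t : ℝ, x + t • e ∈ polyOf Pset a → x + t • e ∈ F) →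
      -- and transversal to e
      (∀ x ∈ F, ∀ t : ℝ, x + t • e ∈ F → t = 0) →
      -- is a contact face F(p) with ⟪e, p⟫ = 0
      ∃ p ∈ Pset, ⟪e, p⟫ = 0 ∧ F = polyOf Pset a ∩ {x | ⟪p, x⟫ = a p}) :
    polyOf Pset a + segZ e b = polyOf Pset (fun p => a p + b * |⟪p, e⟫|) := by
  have hne : (polyOf Pset a).Nonempty := by
    refine nonempty_iff_ne_empty.2 fun hP => he ?_
    rw [hP, sdim, AffineSubspace.span_empty, AffineSubspace.direction_bot, finrank_bot] at hdim
    subst hdim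
    exact Subsingleton.elim _ _
  obtain ⟨y₀, hy₀⟩ := interior_polyOf_nonempty hdim hne
  refine (polyOf_add_segZ_subset b).antisymm fun x hx => ?_
  obtain ⟨t, ht⟩ := exists_sub_smul_mem_polyOf hfin hface hy₀ fun p hp hpe => by
    simpa [hpe] using hx p hp
  exact mem_polyOf_add_segZ hb ht hx

/-- if every `(d-2)`-dimensional exposed face of `P(a)` lying on the shadow
boundary in direction `e` and transversal to `e` is a contact face with contact vector
orthogonal to `e`, then `P(a) + b·z(e) = P(a + f_e)`. -/
theorem minkowski_voronoi_stmt6 {d : ℕ}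
    (Pset : Set (EuclideanSpace ℝ (Fin d))) (hfin : Pset.Finite)
    (hsym : ∀ p ∈ Pset, -p ∈ Pset)
    (a : EuclideanSpace ℝ (Fin d) → ℝ)
    (hcomp : IsCompact (polyOf Pset a)) (hdim : sdim (polyOf Pset a) = d)
    (e : EuclideanSpace ℝ (Fin d)) (he : e ≠ 0) (b : ℝ) (hb : 0 ≤ b)
    (hface : ∀ F : Set (EuclideanSpace ℝ (Fin d)),
      -- F is an exposed face of P(a)
      (∃ u : EuclideanSpace ℝ (Fin d), u ≠ 0 ∧ F = expFace (polyOf Pset a) u) →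
      -- of dimension d - 2
      sdim F = d - 2 →
      -- belonging to the shadow boundary of P(a) in direction e
      (∀ x ∈ F, ∀ t : ℝ, x + t • e ∈ polyOf Pset a → x + t • e ∈ F) →
      -- and transversal to e
      (∀ x ∈ F, ∀ t : ℝ, x + t • e ∈ F → t = 0) →
      -- is a contact face F(p) with ⟪e, p⟫ = 0
      ∃ p ∈ Pset, ⟪e, p⟫ = 0 ∧ F = polyOf Pset a ∩ {x | ⟪p, x⟫ = a p}) :
    polyOf Pset a + segZ e b = polyOf Pset (fun p => a p + b * |⟪p, e⟫|) :=
  minkowski_voronoi_stmt6_general Pset hfin a hdim e he b hb hface
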